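/- arXiv:2507.03449 — 3 statements merged into one kernel-verified Lean document; each statement's English description precedes it below -/
import Mathlib

section
/- The secrecy rate R_c(α) = log₂((σ² + α P g1)/(σ² + α P g2)) is a concave function of α on [0,1] when g1 ≥ g2 ≥ 0, σ² > 0, P > 0. -/
private lemma concaveOn_congr' {s : Set ℝ} {f g : ℝ → ℝ} (hg : ConcaveOn ℝ s g)
    (h : ∀ x ∈ s, f x = g x) : ConcaveOn ℝ s f := by
  refine ⟨hg.1, fun x hx y hy a b ha hb hab => ?_⟩
  rw [h _ hx, h _ hy, h _ (hg.1 hx hy ha hb hab)]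
  exact hg.2 hx hy ha hb hab

private lemma aux_pos {σ2 P b x : ℝ} (hσ : 0 < σ2) (hP : 0 < P) (hb : 0 ≤ b) (hx : 0 ≤ x) :
    0 < σ2 + x * P * b := by positivity

private lemma aux_hasDerivAt {σ2 P b : ℝ} (x : ℝ) :
    HasDerivAt (fun α : ℝ => σ2 + α * P * b) (P * b) x := by
  have h : HasDerivAt (fun α : ℝ => σ2 + α * P * b) (1 * P * b) x :=
    (((hasDerivAt_id x).mul_const P).mul_const b).const_add σ2
  simpa using h

private lemma concave_logdiff (g1 g2 σ2 P : ℝ) (hg2 : 0 ≤ g2) (hg : g2 ≤ g1) (hσ : 0 < σ2)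
    (hP : 0 < P) :
    ConcaveOn ℝ (Set.Icc (0 : ℝ) 1)
      (fun α => Real.log (σ2 + α * P * g1) - Real.log (σ2 + α * P * g2)) := by
  have hg1 : 0 ≤ g1 := le_trans hg2 hg
  refine concaveOn_of_hasDerivWithinAt2_nonpos (f' := fun x =>
      P * g1 / (σ2 + x * P * g1) - P * g2 / (σ2 + x * P * g2))
    (f'' := fun x =>
      (P * g2) ^ 2 / (σ2 + x * P * g2) ^ 2 - (P * g1) ^ 2 / (σ2 + x * P * g1) ^ 2)
    (convex_Icc 0 1) ?_ ?_ ?_ ?_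
  · apply ContinuousOn.sub <;>
    · apply ContinuousOn.log
      · fun_prop
      · intro x hx
        exact (aux_pos hσ hP (by assumption) hx.1).ne'
  · intro x hx
    rw [interior_Icc] at hx
    have h1 := ((aux_hasDerivAt (σ2 := σ2) (P := P) (b := g1) x).log
      (aux_pos hσ hP hg1 hx.1.le).ne')
    have h2 := ((aux_hasDerivAt (σ2 := σ2) (P := P) (b := g2) x).log
      (aux_pos hσ hP hg2 hx.1.le).ne')
    exact (h1.sub h2).hasDerivWithinAt
  · intro x hx
    rw [interior_Icc] at hx
    have d1 : (σ2 + x * P * g1) ≠ 0 := (aux_pos hσ hP hg1 hx.1.le).ne'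
    have d2 : (σ2 + x * P * g2) ≠ 0 := (aux_pos hσ hP hg2 hx.1.le).ne'
    have h1 : HasDerivAt (fun y : ℝ => P * g1 / (σ2 + y * P * g1))
        ((0 * (σ2 + x * P * g1) - P * g1 * (P * g1)) / (σ2 + x * P * g1) ^ 2) x :=
      (hasDerivAt_const x (P * g1)).div (aux_hasDerivAt x) d1
    have h2 : HasDerivAt (fun y : ℝ => P * g2 / (σ2 + y * P * g2))
        ((0 * (σ2 + x * P * g2) - P * g2 * (P * g2)) / (σ2 + x * P * g2) ^ 2) x :=
      (hasDerivAt_const x (P * g2)).div (aux_hasDerivAt x) d2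
    have := (h1.sub h2).hasDerivWithinAt (s := interior (Set.Icc (0:ℝ) 1))
    refine this.congr_deriv ?_
    ring
  · intro x hx
    rw [interior_Icc] at hx
    have p1 : 0 < σ2 + x * P * g1 := aux_pos hσ hP hg1 hx.1.le
    have p2 : 0 < σ2 + x * P * g2 := aux_pos hσ hP hg2 hx.1.le
    have key : (P * g2) ^ 2 / (σ2 + x * P * g2) ^ 2 ≤ (P * g1) ^ 2 / (σ2 + x * P * g1) ^ 2 := by
      rw [div_le_div_iff₀ (by positivity) (by positivity)]
      have hab : P * g2 * (σ2 + x * P * g1) ≤ P * g1 * (σ2 + x * P * g2) := by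
        nlinarith [mul_le_mul_of_nonneg_left hg hP.le, hx.1.le]
      have ha : 0 ≤ P * g2 * (σ2 + x * P * g1) := by positivity
      calc (P * g2) ^ 2 * (σ2 + x * P * g1) ^ 2
          = (P * g2 * (σ2 + x * P * g1)) ^ 2 := by ring
        _ ≤ (P * g1 * (σ2 + x * P * g2)) ^ 2 := by
            exact pow_le_pow_left₀ ha hab 2
        _ = (P * g1) ^ 2 * (σ2 + x * P * g2) ^ 2 := by ring
    linarith

/-- the secrecy rate is concave in the power allocation fraction on [0,1]. -/
theorem stmt3 (g1 g2 σ2 P : ℝ) (hg2 : 0 ≤ g2) (hg : g2 ≤ g1) (hσ : 0 < σ2) (hP : 0 < P) :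
    ConcaveOn ℝ (Set.Icc (0 : ℝ) 1)
      (fun α => Real.logb 2 ((σ2 + α * P * g1) / (σ2 + α * P * g2))) := by
  have hg1 : 0 ≤ g1 := le_trans hg2 hg
  have hG := concave_logdiff g1 g2 σ2 P hg2 hg hσ hP
  have hsm := hG.smul (c := (Real.log 2)⁻¹)
    (by positivity)
  refine concaveOn_congr' hsm ?_
  intro x hx
  have p1 : 0 < σ2 + x * P * g1 := aux_pos hσ hP hg1 hx.1
  have p2 : 0 < σ2 + x * P * g2 := aux_pos hσ hP hg2 hx.1
  simp only [Pi.smul_apply, smul_eq_mul]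
  rw [Real.logb, Real.log_div p1.ne' p2.ne']
  ring
end

section
/- For a fixed-position antenna with channel gains g1 ≥ g2 > 0, σ² > 0, P > 0, and any time-sharing fraction α ∈ [0,1], the time-sharing rate pair (R_c^TS, R_0^TS) with R_c^TS = α log₂((σ² + P g1)/(σ² + P g2)) and R_0^TS = (1-α) log₂(1 + P g2/σ²) is dominated by a superposition-coding rate pair: R_c^TS ≤ log₂((σ² + α P g1)/(σ² + α P g2)) and R_0^TS ≤ log₂(1 + (1-α) P g2/σ²). -/
open Real

/-- Key lemma: `β * logb 2 (1+x) ≤ logb 2 (1+β*x)` for `x ≥ 0`, `β ∈ [0,1]`. -/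
lemma key_logb (x β : ℝ) (hx : 0 ≤ x) (hβ0 : 0 ≤ β) (hβ1 : β ≤ 1) :
    β * Real.logb 2 (1 + x) ≤ Real.logb 2 (1 + β * x) := by
  have h1x : (0:ℝ) < 1 + x := by linarith
  have hbern : (1 + x) ^ β ≤ 1 + β * x :=
    rpow_one_add_le_one_add_mul_self (by linarith) hβ0 hβ1
  have hpos : (0:ℝ) < (1 + x) ^ β := Real.rpow_pos_of_pos h1x β
  calc β * Real.logb 2 (1 + x) = Real.logb 2 ((1 + x) ^ β) := by
        rw [Real.logb, Real.logb, Real.log_rpow h1x, mul_div_assoc]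
    _ ≤ Real.logb 2 (1 + β * x) :=
        Real.logb_le_logb_of_le one_lt_two hpos hbern

/-- superposition coding dominates time sharing for a fixed antenna. -/
theorem stmt4 (g1 g2 σ2 P α : ℝ)
    (hg2 : 0 < g2) (hg : g2 ≤ g1) (hσ : 0 < σ2) (hP : 0 < P)
    (hα0 : 0 ≤ α) (hα1 : α ≤ 1) :
    α * Real.logb 2 ((σ2 + P * g1) / (σ2 + P * g2)) ≤
      Real.logb 2 ((σ2 + α * P * g1) / (σ2 + α * P * g2)) ∧
    (1 - α) * Real.logb 2 (1 + P * g2 / σ2) ≤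
      Real.logb 2 (1 + (1 - α) * P * g2 / σ2) := by
  have hd2 : (0:ℝ) < σ2 + P * g2 := by positivity
  have hd2' : (0:ℝ) < σ2 + α * P * g2 := by positivity
  constructor
  · -- set x = (P*g1 - P*g2)/(σ2 + P*g2)
    set x : ℝ := (P * g1 - P * g2) / (σ2 + P * g2) with hxdef
    have hxnn : 0 ≤ x := by
      apply div_nonneg _ hd2.le; nlinarith
    have h1 : (σ2 + P * g1) / (σ2 + P * g2) = 1 + x := by
      rw [hxdef, one_add_div hd2.ne']; congr 1; ring
    have h2 : 1 + α * x ≤ (σ2 + α * P * g1) / (σ2 + α * P * g2) := by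
      rw [le_div_iff₀ hd2', hxdef, add_mul, one_mul]
      have hnum : 0 ≤ α * (P * g1 - P * g2) := mul_nonneg hα0 (by nlinarith [mul_le_mul_of_nonneg_left hg hP.le])
      have hle : (σ2 + α * P * g2) / (σ2 + P * g2) ≤ 1 := by
        rw [div_le_one hd2]; nlinarith [mul_nonneg (sub_nonneg.mpr hα1) (mul_pos hP hg2).le]
      have heq : α * ((P * g1 - P * g2) / (σ2 + P * g2)) * (σ2 + α * P * g2)
          = α * (P * g1 - P * g2) * ((σ2 + α * P * g2) / (σ2 + P * g2)) := by ring
      have := mul_le_of_le_one_right hnum hle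
      rw [heq]; linarith
    have hk := key_logb x α hxnn hα0 hα1
    rw [h1]
    exact hk.trans (Real.logb_le_logb_of_le one_lt_two (by positivity) h2)
  · have hx : 0 ≤ P * g2 / σ2 := by positivity
    have hk := key_logb (P * g2 / σ2) (1 - α) hx (by linarith) (by linarith)
    calc (1 - α) * Real.logb 2 (1 + P * g2 / σ2)
        ≤ Real.logb 2 (1 + (1 - α) * (P * g2 / σ2)) := hk
      _ = Real.logb 2 (1 + (1 - α) * P * g2 / σ2) := by ring_nf
end

section
/- Suppose an antenna position configuration T* and unit-norm beamformers achieve beamforming gains g_{c,1} = g_{0,1} = g_{0,2} = N and g_{c,2} = 0 (confidential beam nulled at user 2, all other gains maximal). Then for any other configuration T with channels h_k(T) = β_k a_k(T) where ‖a_k(T)‖² = N, and any beamformers w_c, w_0 with ‖w_c‖² = P_c, ‖w_0‖² = P_0, P_c + P_0 ≤ P, setting P̃_c = P_c |ŵ_c^H a_1(T)|²/N (where ŵ_c = w_c/‖w_c‖) and P̃_0 = P - P̃_c yields: R_c(T*) = log₂(1 + P̃_c N |β_1|²/σ²) ≥ log₂((σ² + |h_1(T)^H w_c|²)/(σ² +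 |h_2(T)^H w_c|²)) = R_c(T), i.e., the secrecy rate under T* dominates that under T. -/
open scoped ComplexOrder

/-- the ideal configuration `T*` (maximal gains, confidential
beam nulled at the eavesdropper) yields a secrecy rate dominating that of any
other configuration. -/
theorem stmt11 (N : ℕ) (hN : 0 < N) (σ2 P Pc P0 : ℝ)
    (hσ : 0 < σ2) (hPc : 0 ≤ Pc) (hP0 : 0 ≤ P0) (hsum : Pc + P0 ≤ P)
    (β1 β2 : ℂ)
    (a1 a2 : EuclideanSpace ℂ (Fin N))
    (ha1 : ‖a1‖ ^ 2 = N) (ha2 : ‖a2‖ ^ 2 = N)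
    (h1 h2 : EuclideanSpace ℂ (Fin N))
    (hh1 : h1 = β1 • a1) (hh2 : h2 = β2 • a2)
    (wc w0 : EuclideanSpace ℂ (Fin N))
    (hwc : ‖wc‖ ^ 2 = Pc) (hw0 : ‖w0‖ ^ 2 = P0)
    (Ptc : ℝ)
    (hPtc : Ptc = Pc * ‖(inner ℂ ((1 / ‖wc‖ : ℂ) • wc) a1 : ℂ)‖ ^ 2 / N) :
    Real.logb 2 ((σ2 + ‖(inner ℂ h1 wc : ℂ)‖ ^ 2) / (σ2 + ‖(inner ℂ h2 wc : ℂ)‖ ^ 2)) ≤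
      Real.logb 2 (1 + Ptc * N * ‖β1‖ ^ 2 / σ2) := by
  have hNpos : (0:ℝ) < N := by exact_mod_cast hN
  -- key equality: ‖inner h1 wc‖^2 = Ptc * N * ‖β1‖^2
  have hA : ‖(inner ℂ h1 wc : ℂ)‖ ^ 2 = Ptc * N * ‖β1‖ ^ 2 := by
    have h1w : ‖(inner ℂ h1 wc : ℂ)‖ = ‖β1‖ * ‖(inner ℂ a1 wc : ℂ)‖ := by
      rw [hh1, inner_smul_left, norm_mul, RCLike.norm_conj]
    by_cases hwz : wc = 0
    · simp [hwz, hPtc]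
    · have hnw : (0:ℝ) < ‖wc‖ := norm_pos_iff.mpr hwz
      have hin : ‖(inner ℂ ((1 / ‖wc‖ : ℂ) • wc) a1 : ℂ)‖ = (1 / ‖wc‖) * ‖(inner ℂ wc a1 : ℂ)‖ := by
        rw [inner_smul_left, norm_mul, RCLike.norm_conj]
        simp [abs_of_pos hnw]
      have hsymm : ‖(inner ℂ wc a1 : ℂ)‖ = ‖(inner ℂ a1 wc : ℂ)‖ := by
        rw [← inner_conj_symm a1 wc, RCLike.norm_conj]
      rw [hPtc, hin, hsymm, h1w, ← hwc]
      field_simp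
  have hB : σ2 ≤ σ2 + ‖(inner ℂ h2 wc : ℂ)‖ ^ 2 := le_add_of_nonneg_right (by positivity)
  have harg : (σ2 + ‖(inner ℂ h1 wc : ℂ)‖ ^ 2) / (σ2 + ‖(inner ℂ h2 wc : ℂ)‖ ^ 2)
      ≤ 1 + Ptc * N * ‖β1‖ ^ 2 / σ2 := by
    rw [← hA]
    have h2 : (σ2 + ‖(inner ℂ h1 wc : ℂ)‖ ^ 2) / (σ2 + ‖(inner ℂ h2 wc : ℂ)‖ ^ 2)
        ≤ (σ2 + ‖(inner ℂ h1 wc : ℂ)‖ ^ 2) / σ2 := by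
      apply div_le_div_of_nonneg_left (by positivity) hσ hB
    calc _ ≤ (σ2 + ‖(inner ℂ h1 wc : ℂ)‖ ^ 2) / σ2 := h2
      _ = 1 + ‖(inner ℂ h1 wc : ℂ)‖ ^ 2 / σ2 := by field_simp
  have hpos : 0 < (σ2 + ‖(inner ℂ h1 wc : ℂ)‖ ^ 2) / (σ2 + ‖(inner ℂ h2 wc : ℂ)‖ ^ 2) := by
    positivity
  exact Real.logb_le_logb_of_le one_lt_two hpos harg
end
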